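/- arXiv:1812.08065 — 2 statements merged into one kernel-verified Lean document; each statement's English description precedes it below -/
import Mathlib

section
/- A minimal-length sequence of ordered pairs of leaves that reduces a phylogenetic network N to a single-leaf network must be a cherry-picking sequence, and its length equals n + r - 1, where n is the number of leaves of N and r is its reticulation number. -/
/-!
Let `potential N = |X| + |E| - |V|`. On a phylogenetic network it equals `n + r - 1`, since the
indegrees sum to `|E|`, the root has indegree `0` and every other vertex except the reticulations
has indegree `1`. Suppressing a vertex removes one vertex and one edge and keeps the potential;
reducing a cherry deletes a leaf with its edge, reducing a reticulated cherry deletes one edge, so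
either lowers the potential by exactly one, and the single-leaf network has potential `0`. A pair
that is neither kind of cherry changes nothing, so every pair of a shortest reducing sequence is
effective and the sequence has length `n + r - 1`. A leaf disappears only as the first coordinate
of a cherry, which gives the cherry-picking condition.

All of this only uses that edges join vertices, there are no loops, and the taxa label distinct
leaves (`IsLeafLabelled`); these properties survive every reduction.
-/

open scoped Classical

/-- A (representation of a) rooted phylogenetic network: vertices are natural
numbers, `E` is the edge set, `root` the root, `taxa` the set of taxa labelling
the leaves via `label`. -/
structure Network (X : Type) where
  V : Finset ℕ
  E : Finset (ℕ × ℕ)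
  root : ℕ
  taxa : Finset X
  label : X → ℕ

namespace Network

variable {X : Type}

noncomputable def indeg (N : Network X) (v : ℕ) : ℕ :=
  (N.E.filter (fun e => e.2 = v)).card

noncomputable def outdeg (N : Network X) (v : ℕ) : ℕ :=
  (N.E.filter (fun e => e.1 = v)).card

noncomputable def parents (N : Network X) (v : ℕ) : Finset ℕ :=
  (N.E.filter (fun e => e.2 = v)).image Prod.fst

noncomputable def children (N : Network X) (v : ℕ) : Finset ℕ :=
  (N.E.filter (fun e => e.1 = v)).image Prod.snd

/-- The parent of a vertex (meaningful when the vertex has a unique parent,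
e.g. for leaves). -/
noncomputable def theParent (N : Network X) (v : ℕ) : ℕ :=
  (N.parents v).min.untopD 0

def IsLeafNode (N : Network X) (v : ℕ) : Prop := N.indeg v = 1 ∧ N.outdeg v = 0

def IsTreeNode (N : Network X) (v : ℕ) : Prop := N.indeg v = 1 ∧ 2 ≤ N.outdeg v

def IsRetic (N : Network X) (v : ℕ) : Prop := 2 ≤ N.indeg v ∧ N.outdeg v = 1

/-- Well-formedness: a phylogenetic network has a single outdegree-1, indegree-0
root, leaves bijectively labelled by the taxa, all other nodes tree nodes or
reticulations, and it is acyclic. -/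
def IsPhylo (N : Network X) : Prop :=
  N.root ∈ N.V ∧ N.indeg N.root = 0 ∧ N.outdeg N.root = 1 ∧
  (∀ e ∈ N.E, e.1 ∈ N.V ∧ e.2 ∈ N.V) ∧
  Set.InjOn N.label ↑N.taxa ∧
  (∀ x ∈ N.taxa, N.label x ∈ N.V ∧ N.IsLeafNode (N.label x)) ∧
  (∀ v ∈ N.V, N.IsLeafNode v → ∃ x ∈ N.taxa, N.label x = v) ∧
  (∀ v ∈ N.V, v = N.root ∨ N.IsLeafNode v ∨ N.IsTreeNode v ∨ N.IsRetic v) ∧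
  (∀ v : ℕ, ¬ Relation.TransGen (fun a b => (a, b) ∈ N.E) v v)

def SemiBinary (N : Network X) : Prop := ∀ v ∈ N.V, N.IsTreeNode v → N.outdeg v = 2

def IsBinary (N : Network X) : Prop :=
  N.SemiBinary ∧ ∀ v ∈ N.V, N.IsRetic v → N.indeg v = 2

def StackFree (N : Network X) : Prop :=
  ∀ e ∈ N.E, ¬ (N.IsRetic e.1 ∧ N.IsRetic e.2)

def IsTreeChild (N : Network X) : Prop :=
  N.StackFree ∧
  ∀ v ∈ N.V, N.IsTreeNode v → ∃ c ∈ N.children v, N.IsTreeNode c ∨ N.IsLeafNode c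

def IsTree (N : Network X) : Prop := ∀ v ∈ N.V, ¬ N.IsRetic v

/-- Number of reticulation edges minus number of reticulations. -/
noncomputable def reticulationNumber (N : Network X) : ℕ :=
  (N.E.filter (fun e => N.IsRetic e.2)).card - (N.V.filter (fun v => N.IsRetic v)).card

/-- `(x, y)` is a cherry: two distinct leaves sharing a parent. -/
def IsCherry (N : Network X) (x y : X) : Prop :=
  x ∈ N.taxa ∧ y ∈ N.taxa ∧ x ≠ y ∧
  ∃ p : ℕ, (p, N.label x) ∈ N.E ∧ (p, N.label y) ∈ N.E

/-- `(x, y)` is a reticulated cherry: the parent of `x` is a reticulation, the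
parent of `y` a tree node which is also a parent of the parent of `x`. -/
def IsRetCherry (N : Network X) (x y : X) : Prop :=
  x ∈ N.taxa ∧ y ∈ N.taxa ∧ x ≠ y ∧
  ∃ px py : ℕ, (px, N.label x) ∈ N.E ∧ (py, N.label y) ∈ N.E ∧
    N.IsRetic px ∧ N.IsTreeNode py ∧ (py, px) ∈ N.E

def ReduciblePair (N : Network X) (x y : X) : Prop :=
  N.IsCherry x y ∨ N.IsRetCherry x y

noncomputable def delVert (N : Network X) (v : ℕ) : Network X :=
  { V := N.V.erase v,
    E := N.E.filter (fun e => e.1 ≠ v ∧ e.2 ≠ v),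
    root := N.root, taxa := N.taxa, label := N.label }

noncomputable def delEdge (N : Network X) (e : ℕ × ℕ) : Network X :=
  { N with E := N.E.erase e }

/-- Suppress a degree-2 (indegree-1, outdegree-1) vertex. -/
noncomputable def suppress (N : Network X) (v : ℕ) : Network X :=
  if N.indeg v = 1 ∧ N.outdeg v = 1 then
    { V := N.V.erase v,
      E := (N.E.filter (fun e => e.1 ≠ v ∧ e.2 ≠ v)) ∪ (N.parents v ×ˢ N.children v),
      root := N.root, taxa := N.taxa, label := N.label }
  else N

/-- Reduce an ordered pair `(x, y)`: in the cherry case delete the leaf `x` and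
suppress its parent; in the reticulated-cherry case delete the reticulation edge
between the two parents and suppress the resulting degree-2 vertices; otherwise
do nothing. -/
noncomputable def reducePair (N : Network X) (c : X × X) : Network X :=
  if N.IsCherry c.1 c.2 then
    suppress
      { V := N.V.erase (N.label c.1),
        E := N.E.filter (fun e => e.1 ≠ N.label c.1 ∧ e.2 ≠ N.label c.1),
        root := N.root, taxa := N.taxa.erase c.1, label := N.label }
      (N.theParent (N.label c.1))
  else if N.IsRetCherry c.1 c.2 then
    (((N.delEdge (N.theParent (N.label c.2), N.theParent (N.label c.1))).suppress
        (N.theParent (N.label c.2))).suppress (N.theParent (N.label c.1)))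
  else N

/-- Successive reduction of a network by a sequence of ordered pairs. -/
noncomputable def reduceSeq (N : Network X) (S : List (X × X)) : Network X :=
  S.foldl (fun M c => M.reducePair c) N

/-- A network consisting of a single leaf, its root, and the edge between them. -/
def IsSingleLeaf (N : Network X) : Prop :=
  ∃ x ∈ N.taxa, N.V = {N.root, N.label x} ∧ N.E = {(N.root, N.label x)} ∧
    N.root ≠ N.label x

/-- `S` reduces `N` to a single-leaf network. -/
def Reduces (S : List (X × X)) (N : Network X) : Prop :=
  (N.reduceSeq S).IsSingleLeaf

/-- A cherry-picking sequence: ordered pairs of distinct taxa such that each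
second coordinate reappears later as a first coordinate, or is the second
coordinate of the last pair. -/
def IsCPS (S : List (X × X)) : Prop :=
  (∀ p ∈ S, p.1 ≠ p.2) ∧
  ∀ (i : ℕ) (hi : i < S.length),
    ((S.get ⟨i, hi⟩).2 ∈ (S.drop (i + 1)).map Prod.fst) ∨
    (∃ q, S.getLast? = some q ∧ (S.get ⟨i, hi⟩).2 = q.2)

/-- A tree-child sequence: a CPS in which a leaf appearing as a first coordinate
never appears later as a second coordinate. -/
def IsTCS (S : List (X × X)) : Prop :=
  IsCPS S ∧
  ∀ (i j : ℕ) (hi : i < S.length) (hj : j < S.length),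
    i < j → (S.get ⟨i, hi⟩).1 ≠ (S.get ⟨j, hj⟩).2

def IsPartialCPS (S : List (X × X)) : Prop := ∃ T, IsCPS (S ++ T)

def IsPartialTCS (S : List (X × X)) : Prop := ∃ T, IsTCS (S ++ T)

/-- A minimal CPS for `N`: a CPS reducing `N` in which every pair changes the
network. -/
def IsMinimalCPS (S : List (X × X)) (N : Network X) : Prop :=
  IsCPS S ∧ Reduces S N ∧
  ∀ i < S.length, N.reduceSeq (S.take (i + 1)) ≠ N.reduceSeq (S.take i)

def IsMinimalTCS (S : List (X × X)) (N : Network X) : Prop :=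
  IsTCS S ∧ Reduces S N ∧
  ∀ i < S.length, N.reduceSeq (S.take (i + 1)) ≠ N.reduceSeq (S.take i)

/-- A cherry-picking network: a phylogenetic network reducible by some CPS. -/
def IsCPN (N : Network X) : Prop :=
  N.IsPhylo ∧ ∃ S, IsCPS S ∧ Reduces S N

/-- A directed path in `N`, given as its list of vertices. -/
def IsDipath (N : Network X) (l : List ℕ) : Prop :=
  l.Chain' (fun a b => (a, b) ∈ N.E)

def pathEdges (l : List ℕ) : List (ℕ × ℕ) := l.zip l.tail

/-- An embedding of `N'` into `N`: an injective node map and a map of edges to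
edge-disjoint directed paths, respecting the node map and the leaf labels. -/
def IsEmbedding (N' N : Network X) (f : ℕ → ℕ) (g : ℕ × ℕ → List ℕ) : Prop :=
  (∀ v ∈ N'.V, f v ∈ N.V) ∧
  Set.InjOn f ↑N'.V ∧
  (∀ x ∈ N'.taxa, f (N'.label x) = N.label x) ∧
  (∀ e ∈ N'.E, N.IsDipath (g e) ∧ (g e).head? = some (f e.1) ∧
    (g e).getLast? = some (f e.2)) ∧
  (∀ e ∈ N'.E, ∀ e' ∈ N'.E, e ≠ e' →
    ∀ p ∈ pathEdges (g e), p ∉ pathEdges (g e'))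

/-- `N'` is a subnetwork of `N` if `N'` embeds into `N`. -/
def IsSubnetwork (N' N : Network X) : Prop :=
  ∃ f g, IsEmbedding N' N f g

/-- Contract the edge `(u, v)`, identifying `v` with `u`. -/
noncomputable def contractEdge (N : Network X) (u v : ℕ) : Network X :=
  { V := N.V.erase v,
    E := (N.E.erase (u, v)).image
      (fun e => ((if e.1 = v then u else e.1), (if e.2 = v then u else e.2))),
    root := if N.root = v then u else N.root,
    taxa := N.taxa,
    label := fun x => if N.label x = v then u else N.label x }

def ContractStep (N M : Network X) : Prop :=
  ∃ u v : ℕ, (u, v) ∈ N.E ∧ M = N.contractEdge u v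

/-- `N` is a refinement of `M` if `M` can be obtained from `N` by contracting
some edges. -/
def IsRefinement (N M : Network X) : Prop :=
  Relation.ReflTransGen ContractStep N M

/-- `N` contains `M` if some refinement of `M` is a subnetwork of `N`. -/
def Contains (N M : Network X) : Prop :=
  ∃ M' : Network X, IsRefinement M' M ∧ IsSubnetwork M' N

/-- Isomorphism of labelled networks. -/
def Isomorphic (N N' : Network X) : Prop :=
  N.taxa = N'.taxa ∧
  ∃ f : ℕ → ℕ, Set.BijOn f ↑N.V ↑N'.V ∧
    (∀ u ∈ N.V, ∀ v ∈ N.V, ((u, v) ∈ N.E ↔ (f u, f v) ∈ N'.E)) ∧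
    f N.root = N'.root ∧
    (∀ x ∈ N.taxa, f (N.label x) = N'.label x)

end Network

open Network

namespace Network

variable {X : Type} {M : Network X} {u v w : ℕ}

lemma outdeg_eq_zero_iff : M.outdeg v = 0 ↔ ∀ w, (v, w) ∉ M.E := by
  rw [outdeg, Finset.card_eq_zero, Finset.filter_eq_empty_iff]
  exact ⟨fun h w hw => h hw rfl, fun h e he hev => h e.2 (hev ▸ he)⟩

lemma indeg_eq_one_iff : M.indeg v = 1 ↔ ∃ u, ∀ u', (u', v) ∈ M.E ↔ u' = u := by
  rw [indeg, Finset.card_eq_one]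
  constructor
  · rintro ⟨⟨a, b⟩, ha⟩
    have hb : (a, b) ∈ M.E.filter (fun e => e.2 = v) := ha ▸ Finset.mem_singleton_self _
    replace hb : b = v := (Finset.mem_filter.1 hb).2
    subst hb
    refine ⟨a, fun u' => ?_⟩
    simpa using Finset.ext_iff.1 ha (u', b)
  · rintro ⟨u, hu⟩
    refine ⟨(u, v), Finset.ext fun ⟨a, b⟩ => ?_⟩
    simp only [Finset.mem_filter, Finset.mem_singleton, Prod.mk.injEq]
    constructor
    · rintro ⟨he, rfl⟩; exact ⟨(hu a).1 he, rfl⟩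
    · rintro ⟨rfl, rfl⟩; exact ⟨(hu a).2 rfl, rfl⟩

lemma outdeg_eq_one_iff : M.outdeg v = 1 ↔ ∃ w, ∀ w', (v, w') ∈ M.E ↔ w' = w := by
  rw [outdeg, Finset.card_eq_one]
  constructor
  · rintro ⟨⟨a, b⟩, ha⟩
    have ha' : (a, b) ∈ M.E.filter (fun e => e.1 = v) := ha ▸ Finset.mem_singleton_self _
    replace ha' : a = v := (Finset.mem_filter.1 ha').2
    subst ha'
    refine ⟨b, fun w' => ?_⟩
    simpa using Finset.ext_iff.1 ha (a, w')
  · rintro ⟨w, hw⟩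
    refine ⟨(v, w), Finset.ext fun ⟨a, b⟩ => ?_⟩
    simp only [Finset.mem_filter, Finset.mem_singleton, Prod.mk.injEq]
    constructor
    · rintro ⟨he, rfl⟩; exact ⟨rfl, (hw b).1 he⟩
    · rintro ⟨rfl, rfl⟩; exact ⟨(hw b).2 rfl, rfl⟩

lemma mem_E_iff_of_indeg_eq_one (h : M.indeg v = 1) (huv : (u, v) ∈ M.E) (u' : ℕ) :
    (u', v) ∈ M.E ↔ u' = u := by
  obtain ⟨u₀, hu₀⟩ := indeg_eq_one_iff.1 h
  rw [hu₀, (hu₀ u).1 huv]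

lemma mem_E_iff_of_outdeg_eq_one (h : M.outdeg v = 1) (hvw : (v, w) ∈ M.E) (w' : ℕ) :
    (v, w') ∈ M.E ↔ w' = w := by
  obtain ⟨w₀, hw₀⟩ := outdeg_eq_one_iff.1 h
  rw [hw₀, (hw₀ w).1 hvw]

lemma isLeafNode_iff :
    M.IsLeafNode v ↔ (∃ u, ∀ u', (u', v) ∈ M.E ↔ u' = u) ∧ ∀ w, (v, w) ∉ M.E := by
  rw [IsLeafNode, indeg_eq_one_iff, outdeg_eq_zero_iff]

lemma parents_eq_singleton (hu : ∀ u', (u', v) ∈ M.E ↔ u' = u) : M.parents v = {u} := by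
  ext a
  simp [parents, hu, eq_comm]

lemma children_eq_singleton (hw : ∀ w', (v, w') ∈ M.E ↔ w' = w) : M.children v = {w} := by
  ext a
  simp [children, hw, eq_comm]

lemma theParent_eq (hu : ∀ u', (u', v) ∈ M.E ↔ u' = u) : M.theParent v = u := by
  rw [theParent, parents_eq_singleton hu, Finset.min_singleton, WithTop.untopD_coe]

structure IsLeafLabelled (N : Network X) : Prop where
  edge_mem : ∀ e ∈ N.E, e.1 ∈ N.V ∧ e.2 ∈ N.V
  loopless : ∀ v, (v, v) ∉ N.E
  injOn_label : Set.InjOn N.label N.taxa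
  label_mem : ∀ x ∈ N.taxa, N.label x ∈ N.V
  isLeafNode_label : ∀ x ∈ N.taxa, N.IsLeafNode (N.label x)

def potential (N : Network X) : ℤ := N.taxa.card + N.E.card - N.V.card

lemma IsLeafLabelled.label_ne_of_mem_E {x : X} (hM : M.IsLeafLabelled) (hx : x ∈ M.taxa)
    (he : (v, w) ∈ M.E) : M.label x ≠ v := by
  rintro rfl
  exact (isLeafNode_iff.1 (hM.isLeafNode_label x hx)).2 w he

@[simp] lemma suppress_taxa : (M.suppress v).taxa = M.taxa := by
  unfold suppress; split_ifs <;> rfl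

@[simp] lemma suppress_label : (M.suppress v).label = M.label := by
  unfold suppress; split_ifs <;> rfl

lemma suppress_of_not (h : ¬ (M.indeg v = 1 ∧ M.outdeg v = 1)) : M.suppress v = M := by
  rw [suppress, if_neg h]

lemma suppress_eq (hu : ∀ u', (u', v) ∈ M.E ↔ u' = u) (hw : ∀ w', (v, w') ∈ M.E ↔ w' = w) :
    M.suppress v =
      { V := M.V.erase v, E := insert (u, w) (M.E.filter fun e => e.1 ≠ v ∧ e.2 ≠ v),
        root := M.root, taxa := M.taxa, label := M.label } := by
  rw [suppress, if_pos ⟨indeg_eq_one_iff.2 ⟨u, hu⟩, outdeg_eq_one_iff.2 ⟨w, hw⟩⟩,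
    parents_eq_singleton hu, children_eq_singleton hw, Finset.singleton_product_singleton,
    Finset.union_singleton]

lemma mem_suppress_E (hu : ∀ u', (u', v) ∈ M.E ↔ u' = u) (hw : ∀ w', (v, w') ∈ M.E ↔ w' = w)
    {a b : ℕ} : (a, b) ∈ (M.suppress v).E ↔ (a = u ∧ b = w) ∨ ((a, b) ∈ M.E ∧ a ≠ v ∧ b ≠ v) := by
  rw [suppress_eq hu hw]
  simp

lemma isLeafNode_suppress {z : ℕ} (hu : ∀ u', (u', v) ∈ M.E ↔ u' = u)
    (hw : ∀ w', (v, w') ∈ M.E ↔ w' = w) (hz : M.IsLeafNode z) : (M.suppress v).IsLeafNode z := by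
  rw [isLeafNode_iff] at hz ⊢
  obtain ⟨⟨p, hp⟩, hout⟩ := hz
  have hzv : z ≠ v := by rintro rfl; exact hout w ((hw w).2 rfl)
  have hzu : z ≠ u := by rintro rfl; exact hout v ((hu z).2 rfl)
  simp only [mem_suppress_E hu hw]
  refine ⟨?_, fun b h => ?_⟩
  · by_cases hzw : z = w
    · subst hzw
      have hpv : p = v := ((hp v).1 ((hw z).2 rfl)).symm
      refine ⟨u, fun q => ⟨?_, fun hq => Or.inl ⟨hq, rfl⟩⟩⟩
      rintro (⟨hq, -⟩ | ⟨hq, hqv, -⟩)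
      · exact hq
      · exact absurd (((hp q).1 hq).trans hpv) hqv
    · refine ⟨p, fun q => ⟨?_, fun hq => Or.inr ⟨(hp q).2 hq, ?_, hzv⟩⟩⟩
      · rintro (⟨-, hq⟩ | ⟨hq, -, -⟩)
        · exact absurd hq hzw
        · exact (hp q).1 hq
      · rintro rfl
        exact hzw ((hw z).1 ((hp _).2 hq))
  · rcases h with ⟨hzu', -⟩ | ⟨h, -, -⟩
    · exact hzu hzu'
    · exact hout b h

lemma IsLeafLabelled.suppress_of_unique (hM : M.IsLeafLabelled)
    (hu : ∀ u', (u', v) ∈ M.E ↔ u' = u) (hw : ∀ w', (v, w') ∈ M.E ↔ w' = w)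
    (hwl : M.IsLeafNode w) : (M.suppress v).IsLeafLabelled := by
  have huv : (u, v) ∈ M.E := (hu u).2 rfl
  have hvw : (v, w) ∈ M.E := (hw w).2 rfl
  have hne_uv : u ≠ v := by rintro rfl; exact hM.loopless u huv
  have hne_wv : w ≠ v := by rintro rfl; exact hM.loopless w hvw
  have hne_uw : u ≠ w := by rintro rfl; exact (isLeafNode_iff.1 hwl).2 v huv
  have hV : (M.suppress v).V = M.V.erase v := by rw [suppress_eq hu hw]
  refine ⟨fun ⟨a, b⟩ he => ?_, fun a ha => ?_, by simpa using hM.injOn_label, fun x hx => ?_,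
    fun x hx => ?_⟩
  · rw [hV, Finset.mem_erase, Finset.mem_erase]
    rcases (mem_suppress_E hu hw).1 he with ⟨rfl, rfl⟩ | ⟨he, hav, hbv⟩
    · exact ⟨⟨hne_uv, (hM.edge_mem _ huv).1⟩, hne_wv, (hM.edge_mem _ hvw).2⟩
    · exact ⟨⟨hav, (hM.edge_mem _ he).1⟩, hbv, (hM.edge_mem _ he).2⟩
  · rcases (mem_suppress_E hu hw).1 ha with ⟨rfl, h⟩ | ⟨ha, -, -⟩
    · exact hne_uw h
    · exact hM.loopless a ha
  · rw [suppress_taxa] at hx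
    rw [hV, suppress_label]
    exact Finset.mem_erase.2 ⟨hM.label_ne_of_mem_E hx hvw, hM.label_mem x hx⟩
  · rw [suppress_taxa] at hx
    rw [suppress_label]
    exact isLeafNode_suppress hu hw (hM.isLeafNode_label x hx)

lemma IsLeafLabelled.potential_suppress_of_unique (hM : M.IsLeafLabelled)
    (hu : ∀ u', (u', v) ∈ M.E ↔ u' = u) (hw : ∀ w', (v, w') ∈ M.E ↔ w' = w)
    (hwl : M.IsLeafNode w) : (M.suppress v).potential = M.potential := by
  have huv : (u, v) ∈ M.E := (hu u).2 rfl
  have hvw : (v, w) ∈ M.E := (hw w).2 rfl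
  have hne_uv : u ≠ v := by rintro rfl; exact hM.loopless u huv
  have huw : (u, w) ∉ M.E := by
    obtain ⟨⟨p, hp⟩, -⟩ := isLeafNode_iff.1 hwl
    intro h
    exact hne_uv (((hp u).1 h).trans ((hp v).1 hvw).symm)
  have htouching : (M.E.filter fun e => ¬ (e.1 ≠ v ∧ e.2 ≠ v)) = {(u, v), (v, w)} := by
    ext ⟨a, b⟩
    simp only [Finset.mem_filter, Finset.mem_insert, Finset.mem_singleton, Prod.mk.injEq]
    constructor
    · rintro ⟨he, h⟩
      by_cases hav : a = v
      · subst hav; exact Or.inr ⟨rfl, (hw b).1 he⟩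
      · have hbv : b = v := by tauto
        subst hbv; exact Or.inl ⟨(hu a).1 he, rfl⟩
    · rintro (⟨rfl, rfl⟩ | ⟨rfl, rfl⟩)
      · exact ⟨huv, by simp⟩
      · exact ⟨hvw, by simp⟩
  have hcard := Finset.card_filter_add_card_filter_not (s := M.E) fun e => e.1 ≠ v ∧ e.2 ≠ v
  rw [htouching, Finset.card_pair (by simp [hne_uv])] at hcard
  have hV : (M.V.erase v).card + 1 = M.V.card :=
    Finset.card_erase_add_one (hM.edge_mem _ hvw).1
  rw [suppress_eq hu hw]
  dsimp only [potential]
  rw [Finset.card_insert_of_notMem (fun h => huw (Finset.mem_filter.1 h).1)]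
  omega

lemma IsLeafLabelled.suppress (hM : M.IsLeafLabelled) (hvw : (v, w) ∈ M.E)
    (hwl : M.IsLeafNode w) :
    (M.suppress v).IsLeafLabelled ∧ (M.suppress v).potential = M.potential ∧
      ∀ e ∈ M.E, e.1 ≠ v → e.2 ≠ v → e ∈ (M.suppress v).E := by
  by_cases hdeg : M.indeg v = 1 ∧ M.outdeg v = 1
  · obtain ⟨u, hu⟩ := indeg_eq_one_iff.1 hdeg.1
    have hw := mem_E_iff_of_outdeg_eq_one hdeg.2 hvw
    refine ⟨hM.suppress_of_unique hu hw hwl, hM.potential_suppress_of_unique hu hw hwl,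
      fun e he h₁ h₂ => ?_⟩
    rw [suppress_eq hu hw]
    exact Finset.mem_insert_of_mem (Finset.mem_filter.2 ⟨he, h₁, h₂⟩)
  · rw [suppress_of_not hdeg]
    exact ⟨hM, rfl, fun e he _ _ => he⟩

section RemoveLeaf

variable {x : X}

noncomputable def removeLeaf (M : Network X) (x : X) : Network X :=
  { V := M.V.erase (M.label x),
    E := M.E.filter (fun e => e.1 ≠ M.label x ∧ e.2 ≠ M.label x),
    root := M.root, taxa := M.taxa.erase x, label := M.label }

lemma IsLeafLabelled.removeLeaf_E (hM : M.IsLeafLabelled) (hx : x ∈ M.taxa) :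
    (M.removeLeaf x).E = M.E.filter fun e => ¬ e.2 = M.label x := by
  refine Finset.filter_congr fun ⟨a, b⟩ he => ?_
  simp [(hM.label_ne_of_mem_E hx he).symm]

lemma IsLeafLabelled.removeLeaf (hM : M.IsLeafLabelled) (hx : x ∈ M.taxa) :
    (M.removeLeaf x).IsLeafLabelled ∧ (M.removeLeaf x).potential + 1 = M.potential := by
  have hE := hM.removeLeaf_E hx
  have hsub : (M.removeLeaf x).E ⊆ M.E := hE ▸ Finset.filter_subset _ _
  have hin : ∀ z ∈ (M.removeLeaf x).taxa, ∀ a,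
      (a, M.label z) ∈ (M.removeLeaf x).E ↔ (a, M.label z) ∈ M.E := by
    intro z hz a
    obtain ⟨hzx, hz⟩ := Finset.mem_erase.1 hz
    rw [hE, Finset.mem_filter, and_iff_left_iff_imp]
    exact fun _ h => hzx (hM.injOn_label hz hx h)
  refine ⟨⟨fun e he => ?_, fun a ha => hM.loopless a (hsub ha),
    hM.injOn_label.mono (Finset.erase_subset _ _), fun z hz => ?_, fun z hz => ?_⟩, ?_⟩
  · have he' := Finset.mem_filter.1 he
    exact ⟨Finset.mem_erase.2 ⟨he'.2.1, (hM.edge_mem e he'.1).1⟩,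
      Finset.mem_erase.2 ⟨he'.2.2, (hM.edge_mem e he'.1).2⟩⟩
  · obtain ⟨hzx, hz⟩ := Finset.mem_erase.1 hz
    exact Finset.mem_erase.2 ⟨fun h => hzx (hM.injOn_label hz hx h), hM.label_mem z hz⟩
  · obtain ⟨⟨p, hp⟩, hout⟩ := isLeafNode_iff.1 (hM.isLeafNode_label z (Finset.mem_erase.1 hz).2)
    exact isLeafNode_iff.2 ⟨⟨p, fun a => (hin z hz a).trans (hp a)⟩,
      fun b h => hout b (hsub h)⟩
  · have hcard := Finset.card_filter_add_card_filter_not (s := M.E) fun e => e.2 = M.label x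
    rw [← hE, ← indeg, (hM.isLeafNode_label x hx).1] at hcard
    have htaxa := Finset.card_erase_add_one hx
    have hV := Finset.card_erase_add_one (hM.label_mem x hx)
    simp only [potential, Network.removeLeaf] at hcard htaxa hV ⊢
    omega

end RemoveLeaf

lemma IsLeafLabelled.delEdge (hM : M.IsLeafLabelled) {e : ℕ × ℕ} (he : e ∈ M.E)
    (he₂ : M.outdeg e.2 ≠ 0) :
    (M.delEdge e).IsLeafLabelled ∧ (M.delEdge e).potential + 1 = M.potential := by
  have hsub : (M.delEdge e).E ⊆ M.E := Finset.erase_subset _ _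
  refine ⟨⟨fun e' he' => hM.edge_mem e' (hsub he'), fun a ha => hM.loopless a (hsub ha),
    hM.injOn_label, hM.label_mem, fun z hz => ?_⟩, ?_⟩
  · have hzl := hM.isLeafNode_label z hz
    obtain ⟨⟨p, hp⟩, hout⟩ := isLeafNode_iff.1 hzl
    have hne : ∀ a, (a, M.label z) ≠ e := by
      rintro a rfl
      exact he₂ hzl.2
    refine isLeafNode_iff.2 ⟨⟨p, fun a => ?_⟩, fun b h => hout b (hsub h)⟩
    rw [← hp a]
    exact ⟨fun h => hsub h, fun h => Finset.mem_erase.2 ⟨hne a, h⟩⟩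
  · have hcard := Finset.card_erase_add_one he
    simp only [potential, Network.delEdge] at hcard ⊢
    omega

section Reduction

variable {c : X × X} {x y : X}

lemma ReduciblePair.ne (h : M.ReduciblePair x y) : x ≠ y := by
  rcases h with h | h <;> exact h.2.2.1

lemma ReduciblePair.right_mem (h : M.ReduciblePair x y) : y ∈ M.taxa := by
  rcases h with h | h <;> exact h.2.1

lemma reducePair_eq_of_isCherry (h : M.IsCherry c.1 c.2) :
    M.reducePair c = (M.removeLeaf c.1).suppress (M.theParent (M.label c.1)) := by
  rw [reducePair, if_pos h]
  rfl

lemma reducePair_eq_of_isRetCherry (hc : ¬ M.IsCherry c.1 c.2) (h : M.IsRetCherry c.1 c.2) :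
    M.reducePair c =
      ((M.delEdge (M.theParent (M.label c.2), M.theParent (M.label c.1))).suppress
        (M.theParent (M.label c.2))).suppress (M.theParent (M.label c.1)) := by
  rw [reducePair, if_neg hc, if_pos h]

lemma reducePair_eq_self_of_not_reduciblePair (h : ¬ M.ReduciblePair c.1 c.2) : M.reducePair c = M := by
  rw [ReduciblePair, not_or] at h
  rw [reducePair, if_neg h.1, if_neg h.2]

lemma reducePair_taxa :
    (M.reducePair c).taxa = if M.IsCherry c.1 c.2 then M.taxa.erase c.1 else M.taxa := by
  unfold reducePair
  split_ifs <;> simp [Network.delEdge]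

lemma IsLeafLabelled.theParent_label (hM : M.IsLeafLabelled) (hx : x ∈ M.taxa)
    (hp : (u, M.label x) ∈ M.E) : M.theParent (M.label x) = u :=
  theParent_eq (mem_E_iff_of_indeg_eq_one (hM.isLeafNode_label x hx).1 hp)

lemma IsLeafLabelled.reducePair_of_isCherry (hM : M.IsLeafLabelled) (h : M.IsCherry c.1 c.2) :
    (M.reducePair c).IsLeafLabelled ∧ (M.reducePair c).potential + 1 = M.potential := by
  rw [reducePair_eq_of_isCherry h]
  obtain ⟨hx, hy, hxy, p, hpx, hpy⟩ := h
  rw [hM.theParent_label hx hpx]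
  obtain ⟨hM₁, hpot₁⟩ := hM.removeLeaf hx
  have hy₁ : c.2 ∈ (M.removeLeaf c.1).taxa := Finset.mem_erase.2 ⟨hxy.symm, hy⟩
  have hpy₁ : (p, M.label c.2) ∈ (M.removeLeaf c.1).E := by
    rw [hM.removeLeaf_E hx, Finset.mem_filter]
    exact ⟨hpy, fun h => hxy (hM.injOn_label hy hx h).symm⟩
  obtain ⟨hM₂, hpot₂, -⟩ := hM₁.suppress hpy₁ (hM₁.isLeafNode_label _ hy₁)
  exact ⟨hM₂, hpot₂ ▸ hpot₁⟩

lemma IsLeafLabelled.reducePair_of_isRetCherry (hM : M.IsLeafLabelled)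
    (hc : ¬ M.IsCherry c.1 c.2) (h : M.IsRetCherry c.1 c.2) :
    (M.reducePair c).IsLeafLabelled ∧ (M.reducePair c).potential + 1 = M.potential := by
  rw [reducePair_eq_of_isRetCherry hc h]
  obtain ⟨hx, hy, -, px, py, hpx, hpy, hret, htree, hpypx⟩ := h
  rw [hM.theParent_label hx hpx, hM.theParent_label hy hpy]
  have hpxpy : px ≠ py := by
    rintro rfl
    linarith [hret.2, htree.2]
  obtain ⟨hM₁, hpot₁⟩ := hM.delEdge hpypx (by rw [hret.2]; exact one_ne_zero)
  have hpy₁ : (py, M.label c.2) ∈ (M.delEdge (py, px)).E :=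
    Finset.mem_erase.2 ⟨by simpa using hM.label_ne_of_mem_E hy hpx, hpy⟩
  obtain ⟨hM₂, hpot₂, hkeep₂⟩ := hM₁.suppress hpy₁ (hM₁.isLeafNode_label _ hy)
  have hpx₂ := hkeep₂ (px, M.label c.1) (Finset.mem_erase.2 ⟨by simp [hpxpy], hpx⟩) hpxpy
    (hM.label_ne_of_mem_E hx hpy)
  have hx₂ := hM₂.isLeafNode_label c.1 (by rw [suppress_taxa]; exact hx)
  rw [suppress_label] at hx₂
  obtain ⟨hM₃, hpot₃, -⟩ := hM₂.suppress hpx₂ hx₂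
  exact ⟨hM₃, by rw [hpot₃, hpot₂, hpot₁]⟩

lemma IsLeafLabelled.reducePair_of_reduciblePair (hM : M.IsLeafLabelled)
    (h : M.ReduciblePair c.1 c.2) :
    (M.reducePair c).IsLeafLabelled ∧ (M.reducePair c).potential + 1 = M.potential := by
  by_cases hc : M.IsCherry c.1 c.2
  · exact hM.reducePair_of_isCherry hc
  · exact hM.reducePair_of_isRetCherry hc (h.resolve_left hc)

lemma IsLeafLabelled.reducePair (hM : M.IsLeafLabelled) (c : X × X) :
    (M.reducePair c).IsLeafLabelled := by
  by_cases h : M.ReduciblePair c.1 c.2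
  · exact (hM.reducePair_of_reduciblePair h).1
  · rwa [reducePair_eq_self_of_not_reduciblePair h]

end Reduction

section Sequences

variable {c : X × X} {S T : List (X × X)}

lemma reduceSeq_cons : M.reduceSeq (c :: S) = (M.reducePair c).reduceSeq S := rfl

lemma reduceSeq_append : M.reduceSeq (S ++ T) = (M.reduceSeq S).reduceSeq T :=
  List.foldl_append

lemma IsLeafLabelled.reduceSeq (hM : M.IsLeafLabelled) (S : List (X × X)) :
    (M.reduceSeq S).IsLeafLabelled := by
  induction S generalizing M with
  | nil => exact hM
  | cons c S ih => exact ih (hM.reducePair c)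

lemma mem_taxa_reduceSeq {y : X} (hy : y ∈ M.taxa) (hS : y ∉ S.map Prod.fst) :
    y ∈ (M.reduceSeq S).taxa := by
  induction S generalizing M with
  | nil => exact hy
  | cons c S ih =>
    rw [List.map_cons, List.mem_cons, not_or] at hS
    refine ih ?_ hS.2
    rw [reducePair_taxa]
    split_ifs
    · exact Finset.mem_erase.2 ⟨hS.1, hy⟩
    · exact hy

def PairsReducible (M : Network X) (S : List (X × X)) : Prop :=
  ∀ i (hi : i < S.length), (M.reduceSeq (S.take i)).ReduciblePair S[i].1 S[i].2

lemma PairsReducible.cons (h : M.PairsReducible (c :: S)) :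
    M.ReduciblePair c.1 c.2 ∧ (M.reducePair c).PairsReducible S :=
  ⟨h 0 (Nat.succ_pos _), fun i hi => h (i + 1) (Nat.succ_lt_succ hi)⟩

lemma pairsReducible_of_minimal (hred : Reduces S M)
    (hmin : ∀ T : List (X × X), Reduces T M → S.length ≤ T.length) : M.PairsReducible S := by
  intro i hi
  by_contra h
  have hskip : M.reduceSeq (S.eraseIdx i) = M.reduceSeq S := by
    conv_rhs => rw [← List.take_append_drop i S, List.drop_eq_getElem_cons hi]
    rw [List.eraseIdx_eq_take_drop_succ, reduceSeq_append, reduceSeq_append, reduceSeq_cons,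
      reducePair_eq_self_of_not_reduciblePair h]
  have hlen := hmin _ (show (M.reduceSeq (S.eraseIdx i)).IsSingleLeaf from hskip ▸ hred)
  rw [List.length_eraseIdx, if_pos hi] at hlen
  omega

end Sequences

lemma IsLeafLabelled.taxa_eq_singleton (hM : M.IsLeafLabelled) (h : M.IsSingleLeaf) :
    ∃ x, M.taxa = {x} := by
  obtain ⟨x, hx, hV, hE, -⟩ := h
  refine ⟨x, Finset.eq_singleton_iff_unique_mem.2 ⟨hx, fun z hz => ?_⟩⟩
  have hzV := hM.label_mem z hz
  rw [hV, Finset.mem_insert, Finset.mem_singleton] at hzV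
  rcases hzV with hroot | hzx
  · exact absurd hroot (hM.label_ne_of_mem_E hz (hE ▸ Finset.mem_singleton_self _))
  · exact hM.injOn_label hz hx hzx

lemma IsLeafLabelled.potential_eq_zero (hM : M.IsLeafLabelled) (h : M.IsSingleLeaf) :
    M.potential = 0 := by
  obtain ⟨x, htaxa⟩ := hM.taxa_eq_singleton h
  obtain ⟨y, -, hV, hE, hne⟩ := h
  simp [potential, htaxa, hV, hE, Finset.card_pair hne]

lemma IsLeafLabelled.potential_eq_length {S : List (X × X)} (hM : M.IsLeafLabelled)
    (hS : M.PairsReducible S) (hred : Reduces S M) : M.potential = S.length := by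
  induction S generalizing M with
  | nil => exact hM.potential_eq_zero hred
  | cons c S ih =>
    obtain ⟨hc, hS⟩ := hS.cons
    obtain ⟨hM', hpot⟩ := hM.reducePair_of_reduciblePair hc
    rw [← hpot, ih hM' hS hred, List.length_cons]
    push_cast
    ring

/-- The second coordinate of a pair survives its own reduction; if no later pair starts with it,
it is the leaf left at the end, and so is the second coordinate of the last pair. -/
lemma IsLeafLabelled.isCPS {S : List (X × X)} (hM : M.IsLeafLabelled) (hS : M.PairsReducible S)
    (hred : Reduces S M) : IsCPS S := by
  obtain ⟨x₀, hx₀⟩ := (hM.reduceSeq S).taxa_eq_singleton hred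
  have hsurvive : ∀ i (hi : i < S.length), S[i].2 ∈ (M.reduceSeq (S.take (i + 1))).taxa := by
    intro i hi
    rw [← List.take_concat_get' S i hi, reduceSeq_append]
    show S[i].2 ∈ ((M.reduceSeq (S.take i)).reducePair S[i]).taxa
    rw [reducePair_taxa]
    split_ifs
    · exact Finset.mem_erase.2 ⟨(hS i hi).ne.symm, (hS i hi).right_mem⟩
    · exact (hS i hi).right_mem
  refine ⟨fun p hp => ?_, fun i hi => ?_⟩
  · obtain ⟨i, hi, rfl⟩ := List.getElem_of_mem hp
    exact (hS i hi).ne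
  · simp only [List.get_eq_getElem]
    by_cases hlater : S[i].2 ∈ (S.drop (i + 1)).map Prod.fst
    · exact Or.inl hlater
    · have hfinal := mem_taxa_reduceSeq (hsurvive i hi) hlater
      rw [← reduceSeq_append, List.take_append_drop, hx₀, Finset.mem_singleton] at hfinal
      have hlast := hsurvive (S.length - 1) (by omega)
      rw [Nat.sub_add_cancel (by omega), List.take_length, hx₀, Finset.mem_singleton] at hlast
      refine Or.inr ⟨S[S.length - 1], ?_, hfinal.trans hlast.symm⟩
      rw [List.getLast?_eq_getElem?, List.getElem?_eq_getElem]

lemma IsPhylo.isLeafLabelled (h : M.IsPhylo) : M.IsLeafLabelled := by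
  obtain ⟨-, -, -, hE, hinj, hlabel, -, -, hacyclic⟩ := h
  exact ⟨hE, fun v hv => hacyclic v (.single hv), hinj, fun x hx => (hlabel x hx).1,
    fun x hx => (hlabel x hx).2⟩

lemma IsPhylo.potential_add_one (h : M.IsPhylo) :
    M.potential + 1 = M.taxa.card + M.reticulationNumber := by
  obtain ⟨hroot, hroot_in, -, hE, -, -, -, hclass, -⟩ := h
  have hE_card : M.E.card = ∑ v ∈ M.V, M.indeg v :=
    Finset.card_eq_sum_card_fiberwise fun e he => (hE e he).2
  have hretEdges : (M.E.filter fun e => M.IsRetic e.2).card =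
      ∑ v ∈ M.V with M.IsRetic v, M.indeg v := by
    rw [Finset.card_eq_sum_card_fiberwise (f := Prod.snd) fun e he =>
      Finset.mem_filter.2 ⟨(hE e (Finset.mem_filter.1 he).1).2, (Finset.mem_filter.1 he).2⟩]
    refine Finset.sum_congr rfl fun v hv => ?_
    rw [indeg, Finset.filter_filter]
    exact congrArg Finset.card (Finset.filter_congr fun e _ =>
      ⟨And.right, fun hev => ⟨hev ▸ (Finset.mem_filter.1 hv).2, hev⟩⟩)
  have hroot_mem : M.root ∈ M.V.filter fun v => ¬ M.IsRetic v :=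
    Finset.mem_filter.2 ⟨hroot, fun hr => by have := hr.1; omega⟩
  have hnonret : ∑ v ∈ M.V with ¬ M.IsRetic v, M.indeg v + 1 =
      (M.V.filter fun v => ¬ M.IsRetic v).card := by
    rw [← Finset.add_sum_erase _ _ hroot_mem, hroot_in, zero_add,
      Finset.sum_congr rfl fun v hv => ?_, Finset.sum_const, smul_eq_mul, mul_one,
      Finset.card_erase_add_one hroot_mem]
    obtain ⟨hvroot, hv⟩ := Finset.mem_erase.1 hv
    obtain ⟨hvV, hvret⟩ := Finset.mem_filter.1 hv
    rcases hclass v hvV with h | h | h | h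
    · exact absurd h hvroot
    · exact h.1
    · exact h.1
    · exact absurd h hvret
  have hret_le : (M.V.filter fun v => M.IsRetic v).card ≤
      (M.E.filter fun e => M.IsRetic e.2).card := by
    rw [hretEdges, Finset.card_eq_sum_ones]
    exact Finset.sum_le_sum fun v hv => le_trans one_le_two (Finset.mem_filter.1 hv).2.1
  have hV_split := Finset.card_filter_add_card_filter_not (s := M.V) fun v => M.IsRetic v
  have hE_split := Finset.sum_filter_add_sum_filter_not M.V (fun v => M.IsRetic v) M.indeg
  simp only [potential, reticulationNumber]
  omega

end Network

/-- A minimal-length sequence of ordered pairs of leaves that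
reduces a phylogenetic network `N` to a single-leaf network must be a
cherry-picking sequence, and its length equals `n + r - 1` where `n` is the
number of leaves and `r` the reticulation number of `N`. -/
theorem minimal_length_reducing_sequence_is_CPS (X : Type) (N : Network X)
    (hN : N.IsPhylo) (S : List (X × X)) (hred : Reduces S N)
    (hmin : ∀ T : List (X × X), Reduces T N → S.length ≤ T.length) :
    IsCPS S ∧ S.length + 1 = N.taxa.card + N.reticulationNumber := by
  have hM := hN.isLeafLabelled
  have hS := pairsReducible_of_minimal hred hmin
  refine ⟨hM.isCPS hS hred, ?_⟩
  have hlength := hM.potential_eq_length hS hred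
  have hcount := hN.potential_add_one
  omega
end

section
/- Let N be a phylogenetic network on taxa set X and let (x,y) be a reducible pair of N. Then every reducible pair of N(x,y) that is not a reducible pair of N involves x or y; formally, C(N(x,y)) \ C(N) ⊆ ({x,y} × X) ∪ (X × {x,y}). -/
open scoped Classical

/-! Reducing `(x, y)` is a composite of an edge or leaf deletion and suppressions of
degree-2 vertices. None of these steps turns a vertex into a tree node or a reticulation,
and every edge they create ends at the leaf of `x` or of `y`. A reducible pair `(z, w)` of
`N(x,y)` is witnessed by edges ending at the leaves of `z` and `w` and at a reticulation; if
`z, w ∉ {x, y}`, none of these ends is a leaf of `x` or `y`, so the witnesses already exist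
in `N`. -/

namespace Network

variable {X : Type} {N M N₁ N₂ N₃ : Network X}

noncomputable def addEdge (N : Network X) (e : ℕ × ℕ) : Network X :=
  { N with E := insert e N.E }

/-- The leaf deletion performed by `reducePair` on a cherry. -/
noncomputable def delLeaf (N : Network X) (x : X) : Network X :=
  { V := N.V.erase (N.label x),
    E := N.E.filter (fun e => e.1 ≠ N.label x ∧ e.2 ≠ N.label x),
    root := N.root, taxa := N.taxa.erase x, label := N.label }

lemma indeg_congr (h : N.E = M.E) (v : ℕ) : N.indeg v = M.indeg v := by
  simp only [indeg, h]

lemma outdeg_congr (h : N.E = M.E) (v : ℕ) : N.outdeg v = M.outdeg v := by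
  simp only [outdeg, h]

lemma eq_of_indeg_eq_one {v p : ℕ} {e : ℕ × ℕ} (h : N.indeg v = 1) (hp : (p, v) ∈ N.E)
    (he : e ∈ N.E) (hev : e.2 = v) : e = (p, v) :=
  Finset.card_le_one.mp h.le e (Finset.mem_filter.mpr ⟨he, hev⟩) (p, v)
    (Finset.mem_filter.mpr ⟨hp, rfl⟩)

lemma eq_of_outdeg_eq_one {v c : ℕ} {e : ℕ × ℕ} (h : N.outdeg v = 1) (hc : (v, c) ∈ N.E)
    (he : e ∈ N.E) (hev : e.1 = v) : e = (v, c) :=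
  Finset.card_le_one.mp h.le e (Finset.mem_filter.mpr ⟨he, hev⟩) (v, c)
    (Finset.mem_filter.mpr ⟨hc, rfl⟩)

lemma fst_ne_of_outdeg_eq_zero {v : ℕ} {e : ℕ × ℕ} (h : N.outdeg v = 0) (he : e ∈ N.E) :
    e.1 ≠ v :=
  Finset.filter_eq_empty_iff.mp (Finset.card_eq_zero.mp h) he

lemma exists_parent_ne {v : ℕ} (h : 2 ≤ N.indeg v) (p : ℕ) : ∃ r ≠ p, (r, v) ∈ N.E := by
  obtain ⟨e, he, hne⟩ := Finset.exists_mem_ne h (p, v)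
  obtain ⟨heN, rfl⟩ := Finset.mem_filter.mp he
  exact ⟨e.1, fun h => hne (Prod.ext h rfl), heN⟩

lemma exists_parent {v : ℕ} (h : N.indeg v = 1) : ∃ r, (r, v) ∈ N.E := by
  obtain ⟨e, he⟩ := Finset.card_pos.mp (h ▸ one_pos : 0 < N.indeg v)
  obtain ⟨heN, rfl⟩ := Finset.mem_filter.mp he
  exact ⟨e.1, heN⟩

lemma parents_eq_singleton_s1 {v p : ℕ} (h : N.indeg v = 1) (hp : (p, v) ∈ N.E) :
    N.parents v = {p} := by
  ext r
  simp only [parents, Finset.mem_image, Finset.mem_filter, Finset.mem_singleton]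
  constructor
  · rintro ⟨e, ⟨he, hev⟩, rfl⟩
    rw [eq_of_indeg_eq_one h hp he hev]
  · rintro rfl
    exact ⟨_, ⟨hp, rfl⟩, rfl⟩

lemma children_eq_singleton_s1 {v c : ℕ} (h : N.outdeg v = 1) (hc : (v, c) ∈ N.E) :
    N.children v = {c} := by
  ext r
  simp only [children, Finset.mem_image, Finset.mem_filter, Finset.mem_singleton]
  constructor
  · rintro ⟨e, ⟨he, hev⟩, rfl⟩
    rw [eq_of_outdeg_eq_one h hc he hev]
  · rintro rfl
    exact ⟨_, ⟨hc, rfl⟩, rfl⟩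

lemma theParent_eq_s1 {v p : ℕ} (h : N.indeg v = 1) (hp : (p, v) ∈ N.E) :
    N.theParent v = p := by
  simp only [theParent, parents_eq_singleton_s1 h hp, Finset.min_singleton]
  rfl

lemma indeg_delEdge_of_ne {e : ℕ × ℕ} {u : ℕ} (hu : e.2 ≠ u) :
    (N.delEdge e).indeg u = N.indeg u := by
  simp only [indeg, delEdge, Finset.filter_erase]
  rw [Finset.erase_eq_of_notMem (by simp [hu])]

lemma outdeg_delEdge_of_ne {e : ℕ × ℕ} {u : ℕ} (hu : e.1 ≠ u) :
    (N.delEdge e).outdeg u = N.outdeg u := by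
  simp only [outdeg, delEdge, Finset.filter_erase]
  rw [Finset.erase_eq_of_notMem (by simp [hu])]

lemma indeg_delEdge {e : ℕ × ℕ} (he : e ∈ N.E) :
    (N.delEdge e).indeg e.2 + 1 = N.indeg e.2 := by
  simp only [indeg, delEdge, Finset.filter_erase]
  exact Finset.card_erase_add_one (Finset.mem_filter.mpr ⟨he, rfl⟩)

lemma outdeg_delEdge {e : ℕ × ℕ} (he : e ∈ N.E) :
    (N.delEdge e).outdeg e.1 + 1 = N.outdeg e.1 := by
  simp only [outdeg, delEdge, Finset.filter_erase]
  exact Finset.card_erase_add_one (Finset.mem_filter.mpr ⟨he, rfl⟩)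

lemma indeg_addEdge_of_ne {e : ℕ × ℕ} {u : ℕ} (hu : e.2 ≠ u) :
    (N.addEdge e).indeg u = N.indeg u := by
  simp only [indeg, addEdge, Finset.filter_insert, hu, if_false]

lemma outdeg_addEdge_of_ne {e : ℕ × ℕ} {u : ℕ} (hu : e.1 ≠ u) :
    (N.addEdge e).outdeg u = N.outdeg u := by
  simp only [outdeg, addEdge, Finset.filter_insert, hu, if_false]

lemma indeg_addEdge {e : ℕ × ℕ} (he : e ∉ N.E) :
    (N.addEdge e).indeg e.2 = N.indeg e.2 + 1 := by
  simp only [indeg, addEdge, Finset.filter_insert, if_true]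
  exact Finset.card_insert_of_notMem (fun h => he (Finset.mem_filter.mp h).1)

lemma outdeg_addEdge {e : ℕ × ℕ} (he : e ∉ N.E) :
    (N.addEdge e).outdeg e.1 = N.outdeg e.1 + 1 := by
  simp only [outdeg, addEdge, Finset.filter_insert, if_true]
  exact Finset.card_insert_of_notMem (fun h => he (Finset.mem_filter.mp h).1)

/-- The invariant of the reduction steps: by `ReflectsOutside.reduciblePair`, if `A` contains
no reticulation of `N`, every reducible pair of `N'` whose leaves lie outside `A` is one
of `N`. -/
structure ReflectsOutside (N' N : Network X) (A : Set ℕ) : Prop where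
  taxa_subset : N'.taxa ⊆ N.taxa
  label_eq : N'.label = N.label
  mem_E : ∀ e ∈ N'.E, e.2 ∉ A → e ∈ N.E
  isRetic : ∀ v, N'.IsRetic v → N.IsRetic v
  isTreeNode : ∀ v, N'.IsTreeNode v → N.IsTreeNode v

namespace ReflectsOutside

variable {A B : Set ℕ}

lemma refl (N : Network X) (A : Set ℕ) : ReflectsOutside N N A :=
  ⟨subset_rfl, rfl, fun _ he _ => he, fun _ => id, fun _ => id⟩

lemma trans (h₁ : ReflectsOutside N₂ N₁ A) (h₂ : ReflectsOutside N₃ N₂ A) :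
    ReflectsOutside N₃ N₁ A :=
  ⟨h₂.taxa_subset.trans h₁.taxa_subset, h₂.label_eq.trans h₁.label_eq,
    fun e he hA => h₁.mem_E e (h₂.mem_E e he hA) hA,
    fun v hv => h₁.isRetic v (h₂.isRetic v hv),
    fun v hv => h₁.isTreeNode v (h₂.isTreeNode v hv)⟩

lemma mono (h : ReflectsOutside N₂ N₁ A) (hAB : A ⊆ B) : ReflectsOutside N₂ N₁ B :=
  { h with mem_E := fun e he hB => h.mem_E e he (fun hA => hB (hAB hA)) }

/-- In each alternative `u` cannot be a reticulation or tree node of `N'` unless it is one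
of `N`. -/
lemma of_degrees {N' : Network X} (htaxa : N'.taxa ⊆ N.taxa) (hlabel : N'.label = N.label)
    (hE : ∀ e ∈ N'.E, e.2 ∉ A → e ∈ N.E)
    (hdeg : ∀ u, (N'.indeg u = N.indeg u ∧ N'.outdeg u = N.outdeg u) ∨ N'.outdeg u = 0 ∨
      (N.IsTreeNode u ∧ N'.indeg u ≤ 1) ∨ (N.IsRetic u ∧ N'.outdeg u ≤ 1)) :
    ReflectsOutside N' N A := by
  refine ⟨htaxa, hlabel, hE, fun u hu => ?_, fun u hu => ?_⟩ <;>
  rcases hdeg u with ⟨hin, hout⟩ | hout | ⟨ht, hin⟩ | ⟨hr, hout⟩ <;>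
  simp only [IsRetic, IsTreeNode] at * <;> omega

lemma reduciblePair {N' : Network X} {z w : X} (h : ReflectsOutside N' N A)
    (hA : ∀ v ∈ A, ¬ N.IsRetic v) (hz : N.label z ∉ A) (hw : N.label w ∉ A)
    (hzw : N'.ReduciblePair z w) : N.ReduciblePair z w := by
  rcases hzw with ⟨hz', hw', hne, p, hpz, hpw⟩ | ⟨hz', hw', hne, pz, pw, hpz, hpw, hr, ht, hpwz⟩
  all_goals rw [h.label_eq] at hpz hpw
  · exact Or.inl ⟨h.taxa_subset hz', h.taxa_subset hw', hne, p, h.mem_E _ hpz hz,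
      h.mem_E _ hpw hw⟩
  · have hr := h.isRetic pz hr
    exact Or.inr ⟨h.taxa_subset hz', h.taxa_subset hw', hne, pz, pw, h.mem_E _ hpz hz,
      h.mem_E _ hpw hw, hr, h.isTreeNode pw ht, h.mem_E _ hpwz fun hpz => hA pz hpz hr⟩

end ReflectsOutside

section Operations

variable {A : Set ℕ}

lemma suppress_E {v a b : ℕ} (hin : M.indeg v = 1) (hout : M.outdeg v = 1)
    (ha : (a, v) ∈ M.E) (hb : (v, b) ∈ M.E) :
    (M.suppress v).E = (((M.delEdge (a, v)).delEdge (v, b)).addEdge (a, b)).E := by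
  ext e
  simp only [suppress, hin, hout, and_self, if_true, parents_eq_singleton_s1 hin ha,
    children_eq_singleton_s1 hout hb, Finset.singleton_product_singleton, Finset.mem_union,
    Finset.mem_filter, Finset.mem_singleton, addEdge, delEdge, Finset.mem_insert,
    Finset.mem_erase]
  constructor
  · rintro (⟨he, h1, h2⟩ | rfl)
    · exact Or.inr ⟨fun h => h1 (h ▸ rfl), fun h => h2 (h ▸ rfl), he⟩
    · exact Or.inl rfl
  · rintro (rfl | ⟨h1, h2, he⟩)
    · exact Or.inr rfl
    · exact Or.inl ⟨he, fun h => h1 (eq_of_outdeg_eq_one hout hb he h),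
        fun h => h2 (eq_of_indeg_eq_one hin ha he h)⟩

lemma mem_E_suppress_of_ne {v : ℕ} {e : ℕ × ℕ} (he : e ∈ M.E) (h1 : e.1 ≠ v) (h2 : e.2 ≠ v) :
    e ∈ (M.suppress v).E := by
  unfold suppress
  split_ifs
  · exact Finset.mem_union_left _ (Finset.mem_filter.mpr ⟨he, h1, h2⟩)
  · exact he

lemma reflectsOutside_suppress {v a b : ℕ} (ha : (a, v) ∈ M.E) (hb : (v, b) ∈ M.E)
    (hav : a ≠ v) (hab : (a, b) ∉ M.E) (hbA : b ∈ A) :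
    ReflectsOutside (M.suppress v) M A := by
  by_cases hv : M.indeg v = 1 ∧ M.outdeg v = 1
  swap
  · rw [suppress, if_neg hv]
    exact .refl M A
  obtain ⟨hin, hout⟩ := hv
  have hE := suppress_E hin hout ha hb
  set M' := (M.delEdge (a, v)).delEdge (v, b)
  have hab' : (a, b) ∉ M'.E := fun h => hab (Finset.mem_of_mem_erase (Finset.mem_of_mem_erase h))
  refine .of_degrees (by simp [suppress, hin, hout]) (by simp [suppress, hin, hout])
    (fun e he heA => ?_) (fun u => ?_)
  · rw [hE] at he
    obtain rfl | he := Finset.mem_insert.mp he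
    · exact absurd hbA heA
    · exact Finset.mem_of_mem_erase (Finset.mem_of_mem_erase he)
  rw [indeg_congr hE, outdeg_congr hE]
  have hvb : (v, b) ∈ (M.delEdge (a, v)).E :=
    Finset.mem_erase.mpr ⟨fun h => hav (congrArg Prod.fst h).symm, hb⟩
  by_cases huv : u = v
  · subst huv
    have h1 : M'.outdeg u + 1 = M.outdeg u :=
      (outdeg_delEdge hvb).trans (outdeg_delEdge_of_ne (N := M) (e := (a, u)) hav)
    exact Or.inr (Or.inl (by rw [outdeg_addEdge_of_ne hav]; omega))
  refine Or.inl ⟨?_, ?_⟩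
  · by_cases hbu : b = u
    · subst hbu
      rw [indeg_addEdge hab', indeg_delEdge hvb]
      exact indeg_delEdge_of_ne (N := M) (e := (a, v)) (Ne.symm huv)
    · rw [indeg_addEdge_of_ne hbu, indeg_delEdge_of_ne hbu,
        indeg_delEdge_of_ne (Ne.symm huv)]
  · by_cases hau : a = u
    · subst hau
      rw [outdeg_addEdge hab', outdeg_delEdge_of_ne (N := M.delEdge (a, v)) (e := (v, b))
        (Ne.symm huv)]
      exact outdeg_delEdge ha
    · rw [outdeg_addEdge_of_ne hau, outdeg_delEdge_of_ne (Ne.symm huv),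
        outdeg_delEdge_of_ne hau]

lemma delLeaf_E {x : X} {p : ℕ} (hl : N.IsLeafNode (N.label x)) (hp : (p, N.label x) ∈ N.E) :
    (N.delLeaf x).E = (N.delEdge (p, N.label x)).E := by
  ext e
  simp only [delLeaf, delEdge, Finset.mem_filter, Finset.mem_erase]
  constructor
  · rintro ⟨he, -, h2⟩
    exact ⟨fun h => h2 (h ▸ rfl), he⟩
  · rintro ⟨hne, he⟩
    exact ⟨he, fst_ne_of_outdeg_eq_zero hl.2 he,
      fun h => hne (eq_of_indeg_eq_one hl.1 hp he h)⟩

lemma reflectsOutside_delLeaf {x : X} {p : ℕ} (hl : N.IsLeafNode (N.label x))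
    (hp : (p, N.label x) ∈ N.E) (hpt : N.IsTreeNode p) :
    ReflectsOutside (N.delLeaf x) N A := by
  have hE := delLeaf_E hl hp
  have hpx : p ≠ N.label x := ne_of_apply_ne N.outdeg (by have := hpt.2; have := hl.2; omega)
  refine .of_degrees (Finset.erase_subset _ _) rfl
    (fun e he _ => (Finset.mem_filter.mp he).1) (fun u => ?_)
  rw [indeg_congr hE, outdeg_congr hE]
  by_cases hup : u = p
  · subst hup
    exact Or.inr (Or.inr (Or.inl ⟨hpt, (indeg_delEdge_of_ne hpx.symm).trans_le hpt.1.le⟩))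
  by_cases hux : u = N.label x
  · subst hux
    exact Or.inr (Or.inl ((outdeg_delEdge_of_ne (Ne.symm hup)).trans hl.2))
  exact Or.inl ⟨indeg_delEdge_of_ne (Ne.symm hux), outdeg_delEdge_of_ne (Ne.symm hup)⟩

lemma reflectsOutside_delEdge {u v : ℕ} (hu : N.IsTreeNode u) (hv : N.IsRetic v) :
    ReflectsOutside (N.delEdge (u, v)) N A := by
  have huv : u ≠ v := ne_of_apply_ne N.indeg (by have := hu.1; have := hv.1; omega)
  refine .of_degrees subset_rfl rfl (fun e he _ => Finset.mem_of_mem_erase he) (fun w => ?_)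
  by_cases hwu : w = u
  · subst hwu
    exact Or.inr (Or.inr (Or.inl ⟨hu, (indeg_delEdge_of_ne huv.symm).trans_le hu.1.le⟩))
  by_cases hwv : w = v
  · subst hwv
    exact Or.inr (Or.inr (Or.inr ⟨hv, (outdeg_delEdge_of_ne huv).trans_le hv.2.le⟩))
  exact Or.inl ⟨indeg_delEdge_of_ne (Ne.symm hwv), outdeg_delEdge_of_ne (Ne.symm hwu)⟩

end Operations

lemma IsPhylo.label_injOn (hN : N.IsPhylo) : Set.InjOn N.label N.taxa :=
  hN.2.2.2.2.1

lemma IsPhylo.isLeafNode_label (hN : N.IsPhylo) {x : X} (hx : x ∈ N.taxa) :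
    N.IsLeafNode (N.label x) :=
  (hN.2.2.2.2.2.1 x hx).2

lemma IsPhylo.ne_of_mem_E (hN : N.IsPhylo) {u v : ℕ} (h : (u, v) ∈ N.E) : u ≠ v := by
  rintro rfl
  exact hN.2.2.2.2.2.2.2.2 u (.single h)

lemma IsPhylo.isTreeNode_of_two_children (hN : N.IsPhylo) {v a b : ℕ} (ha : (v, a) ∈ N.E)
    (hb : (v, b) ∈ N.E) (hab : a ≠ b) : N.IsTreeNode v := by
  obtain ⟨-, -, hroot, hEV, -, -, -, hcases, -⟩ := hN
  have h2 : 2 ≤ N.outdeg v := Finset.one_lt_card.mpr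
    ⟨(v, a), Finset.mem_filter.mpr ⟨ha, rfl⟩, (v, b), Finset.mem_filter.mpr ⟨hb, rfl⟩,
      by simp [hab]⟩
  rcases hcases v (hEV _ ha).1 with rfl | hl | ht | hr
  · omega
  · have := hl.2; omega
  · exact ht
  · have := hr.2; omega

lemma IsLeafNode.not_isRetic {v : ℕ} (h : N.IsLeafNode v) : ¬ N.IsRetic v := fun hr => by
  have := h.2; have := hr.2; omega

lemma ReduciblePair.mem_taxa {x y : X} (h : N.ReduciblePair x y) :
    x ∈ N.taxa ∧ y ∈ N.taxa := by
  rcases h with ⟨hx, hy, -⟩ | ⟨hx, hy, -⟩ <;> exact ⟨hx, hy⟩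

lemma reducePair_of_isCherry {x y : X} (h : N.IsCherry x y) :
    N.reducePair (x, y) = (N.delLeaf x).suppress (N.theParent (N.label x)) := by
  rw [reducePair, if_pos h]
  rfl

lemma reducePair_of_isRetCherry {x y : X} (hc : ¬ N.IsCherry x y) (h : N.IsRetCherry x y) :
    N.reducePair (x, y) =
      ((N.delEdge (N.theParent (N.label y), N.theParent (N.label x))).suppress
        (N.theParent (N.label y))).suppress (N.theParent (N.label x)) := by
  rw [reducePair, if_neg hc, if_pos h]

lemma reflectsOutside_reducePair_of_isCherry (hN : N.IsPhylo) {x y : X} (h : N.IsCherry x y) :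
    ReflectsOutside (N.reducePair (x, y)) N {N.label x, N.label y} := by
  obtain ⟨hx, hy, hxy, p, hpx, hpy⟩ := id h
  have hlx := hN.isLeafNode_label hx
  have hly := hN.isLeafNode_label hy
  have hlxy : N.label x ≠ N.label y := fun h => hxy (hN.label_injOn hx hy h)
  have hpt := hN.isTreeNode_of_two_children hpx hpy hlxy
  obtain ⟨q, hqp⟩ := exists_parent hpt.1
  have hqpne := hN.ne_of_mem_E hqp
  rw [reducePair_of_isCherry h, theParent_eq_s1 hlx.1 hpx]
  refine (reflectsOutside_delLeaf hlx hpx hpt).trans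
    (reflectsOutside_suppress (a := q) (b := N.label y) ?_ ?_ hqpne ?_ (by simp))
  · exact Finset.mem_filter.mpr ⟨hqp, fst_ne_of_outdeg_eq_zero hlx.2 hqp, hN.ne_of_mem_E hpx⟩
  · exact Finset.mem_filter.mpr ⟨hpy, hN.ne_of_mem_E hpx, hlxy.symm⟩
  · exact fun hq => hqpne (congrArg Prod.fst
      (eq_of_indeg_eq_one hly.1 hpy (Finset.mem_filter.mp hq).1 rfl))

lemma reflectsOutside_reducePair_of_isRetCherry (hN : N.IsPhylo) {x y : X}
    (hc : ¬ N.IsCherry x y) (h : N.IsRetCherry x y) :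
    ReflectsOutside (N.reducePair (x, y)) N {N.label x, N.label y} := by
  obtain ⟨hx, hy, hxy, px, py, hpx, hpy, hpxr, hpyt, hpypx⟩ := id h
  have hlx := hN.isLeafNode_label hx
  have hly := hN.isLeafNode_label hy
  have hlxy : N.label x ≠ N.label y := fun h => hxy (hN.label_injOn hx hy h)
  have hpypx' := hN.ne_of_mem_E hpypx
  have hlxpy : N.label x ≠ py :=
    ne_of_apply_ne N.outdeg (by have := hlx.2; have := hpyt.2; omega)
  have hlypx : N.label y ≠ px :=
    ne_of_apply_ne N.outdeg (by have := hly.2; have := hpxr.2; omega)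
  obtain ⟨qy, hqy⟩ := exists_parent hpyt.1
  have hqypy := hN.ne_of_mem_E hqy
  obtain ⟨rx, hrxpy, hrx⟩ := exists_parent_ne hpxr.1 py
  rw [reducePair_of_isRetCherry hc h, theParent_eq_s1 hly.1 hpy, theParent_eq_s1 hlx.1 hpx]
  have hM : ReflectsOutside ((N.delEdge (py, px)).suppress py) N {N.label y} :=
    (reflectsOutside_delEdge hpyt hpxr).trans <|
      reflectsOutside_suppress (a := qy)
        (Finset.mem_erase.mpr ⟨fun h => hpypx' (congrArg Prod.snd h), hqy⟩)
        (Finset.mem_erase.mpr ⟨fun h => hlypx (congrArg Prod.snd h), hpy⟩) hqypy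
        (fun h => hqypy (congrArg Prod.fst
          (eq_of_indeg_eq_one hly.1 hpy (Finset.mem_of_mem_erase h) rfl)))
        rfl
  refine (hM.mono (Set.subset_insert _ _)).trans <|
    reflectsOutside_suppress (a := rx) (b := N.label x) ?_ ?_ (hN.ne_of_mem_E hrx) ?_ (by simp)
  · exact mem_E_suppress_of_ne
      (Finset.mem_erase.mpr ⟨fun h => hrxpy (congrArg Prod.fst h), hrx⟩) hrxpy hpypx'.symm
  · exact mem_E_suppress_of_ne
      (Finset.mem_erase.mpr ⟨fun h => hpypx' (congrArg Prod.fst h).symm, hpx⟩)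
      hpypx'.symm hlxpy
  · exact fun h => hN.ne_of_mem_E hrx (congrArg Prod.fst
      (eq_of_indeg_eq_one hlx.1 hpx (hM.mem_E _ h hlxy) rfl))

lemma reflectsOutside_reducePair (hN : N.IsPhylo) {x y : X} (h : N.ReduciblePair x y) :
    ReflectsOutside (N.reducePair (x, y)) N {N.label x, N.label y} := by
  by_cases hc : N.IsCherry x y
  · exact reflectsOutside_reducePair_of_isCherry hN hc
  · exact reflectsOutside_reducePair_of_isRetCherry hN hc (h.resolve_left hc)

end Network

open Network

/-- every reducible pair of `N(x,y)` that is not a reducible pair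
of `N` involves `x` or `y`. -/
theorem new_reducible_pairs_involve_x_or_y (X : Type) (N : Network X)
    (hN : N.IsPhylo) (x y : X) (hxy : N.ReduciblePair x y) (z w : X)
    (hnew : (N.reducePair (x, y)).ReduciblePair z w)
    (hold : ¬ N.ReduciblePair z w) :
    z = x ∨ z = y ∨ w = x ∨ w = y := by
  by_contra! hzw
  obtain ⟨hzx, hzy, hwx, hwy⟩ := hzw
  have hred := reflectsOutside_reducePair hN hxy
  obtain ⟨hx, hy⟩ := hxy.mem_taxa
  obtain ⟨hz, hw⟩ := hnew.mem_taxa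
  have hlabel : ∀ t ∈ N.taxa, t ≠ x → t ≠ y →
      N.label t ∉ ({N.label x, N.label y} : Set ℕ) := by
    rintro t ht htx hty (h | h)
    exacts [htx (hN.label_injOn ht hx h), hty (hN.label_injOn ht hy h)]
  refine hold (hred.reduciblePair ?_ (hlabel z (hred.taxa_subset hz) hzx hzy)
    (hlabel w (hred.taxa_subset hw) hwx hwy) hnew)
  rintro v (rfl | rfl) hv
  exacts [(hN.isLeafNode_label hx).not_isRetic hv, (hN.isLeafNode_label hy).not_isRetic hv]
end
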